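/- The sequence c_k is strictly increasing and satisfies 0 < c_k < 1 for every k ≥ 1. -/

import Mathlib

open Real

/-!
Writing `θₖ = π / 2 ^ (k + 2)`, the half-angle formulas give `a k = 2 cos (2 θₖ)`, hence
`b k = sin θₖ / cos θₖ = tan θₖ`. The recursion for `c` is the addition formula for the tangent,
so `c k = tan (θ₁ + ⋯ + θₖ) = tan (π / 4 - θₖ)`, and the angles `π / 4 - θₖ` increase strictly
inside `(0, π / 4)`, where `tan` is strictly increasing with values in `(0, 1)`.
-/

namespace Real

theorem tan_add_of_cos_ne_zero {x y : ℝ} (hx : cos x ≠ 0) (hy : cos y ≠ 0) :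
    tan (x + y) = (tan x + tan y) / (1 - tan x * tan y) :=
  tan_add' ⟨fun k hk => hx (cos_eq_zero_iff.2 ⟨k, hk⟩),
    fun l hl => hy (cos_eq_zero_iff.2 ⟨l, hl⟩)⟩

theorem tan_pi_div_two_pow_add_two (n : ℕ) :
    tan (π / 2 ^ (n + 2)) = √(2 - sqrtTwoAddSeries 0 n) / sqrtTwoAddSeries 0 (n + 1) := by
  rw [tan_eq_sin_div_cos, sin_pi_over_two_pow_succ, cos_pi_over_two_pow (n + 1)]
  exact div_div_div_cancel_right₀ two_ne_zero _ _

theorem tan_mem_Ioo_zero_one {x : ℝ} (hx : x ∈ Set.Ioo 0 (π / 4)) : tan x ∈ Set.Ioo 0 1 := by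
  obtain ⟨hx₀, hx₁⟩ := hx
  refine ⟨tan_pos_of_pos_of_lt_pi_div_two hx₀ (by linarith [pi_pos]), ?_⟩
  rw [← tan_pi_div_four]
  exact strictMonoOn_tan ⟨by linarith [pi_pos], by linarith [pi_pos]⟩
    ⟨by linarith [pi_pos], by linarith [pi_pos]⟩ hx₁

end Real

theorem pi_div_two_pow_mem_Ioc {k : ℕ} (hk : 1 ≤ k) : π / 2 ^ (k + 2) ∈ Set.Ioc 0 (π / 8) := by
  refine ⟨by positivity, div_le_div_of_nonneg_left pi_pos.le (by norm_num) ?_⟩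
  calc (8 : ℝ) = 2 ^ 3 := by norm_num
    _ ≤ 2 ^ (k + 2) := pow_le_pow_right₀ one_le_two (by omega)

theorem pi_div_two_pow_succ_lt (k : ℕ) : π / 2 ^ (k + 1) < π / 2 ^ k :=
  div_lt_div_of_pos_left pi_pos (by positivity) (pow_lt_pow_right₀ one_lt_two (by omega))

theorem eq_sqrtTwoAddSeries {a : ℕ → ℝ} (ha1 : a 1 = √2)
    (ha : ∀ k ≥ 1, a (k + 1) = √(2 + a k)) : ∀ k ≥ 1, a k = sqrtTwoAddSeries 0 k := by
  intro k hk
  induction k, hk using Nat.le_induction with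
  | base => rw [ha1, sqrtTwoAddSeries_one]
  | succ k hk ih => rw [ha k hk, ih, sqrtTwoAddSeries]

theorem eq_tan_pi_div_four_sub {b c : ℕ → ℝ} (hb : ∀ k ≥ 1, b k = tan (π / 2 ^ (k + 2)))
    (hc1 : c 1 = b 1) (hc : ∀ k ≥ 1, c (k + 1) = (c k + b (k + 1)) / (1 - c k * b (k + 1))) :
    ∀ k ≥ 1, c k = tan (π / 4 - π / 2 ^ (k + 2)) := by
  intro k hk
  induction k, hk using Nat.le_induction with
  | base =>
    rw [hc1, hb 1 le_rfl]
    congr 1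
    ring
  | succ k hk ih =>
    obtain ⟨hθ₀, hθ₁⟩ := pi_div_two_pow_mem_Ioc hk
    obtain ⟨hθ₀', hθ₁'⟩ := pi_div_two_pow_mem_Ioc (k := k + 1) (by omega)
    have hsum : π / 4 - π / 2 ^ (k + 1 + 2) = π / 4 - π / 2 ^ (k + 2) + π / 2 ^ (k + 1 + 2) := by
      rw [pow_succ _ (k + 2)]
      ring
    rw [hc k hk, ih, hb (k + 1) (by omega), hsum, tan_add_of_cos_ne_zero]
    all_goals exact (cos_pos_of_mem_Ioo ⟨by linarith [pi_pos], by linarith [pi_pos]⟩).ne'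

theorem c_strict_mono_between_zero_one (a : ℕ → ℝ)
    (ha1 : a 1 = Real.sqrt 2)
    (ha : ∀ k ≥ 1, a (k + 1) = Real.sqrt (2 + a k))
    (b : ℕ → ℝ)
    (hb : ∀ k ≥ 1, b k = Real.sqrt (2 - a k) / a (k + 1))
    (c : ℕ → ℝ)
    (hc1 : c 1 = b 1)
    (hc : ∀ k ≥ 1, c (k + 1) = (c k + b (k + 1)) / (1 - c k * b (k + 1))) :
    (∀ k ≥ 1, c k < c (k + 1)) ∧ (∀ k ≥ 1, 0 < c k ∧ c k < 1) := by
  have ha' := eq_sqrtTwoAddSeries ha1 ha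
  have hb' : ∀ k ≥ 1, b k = tan (π / 2 ^ (k + 2)) := fun k hk => by
    rw [hb k hk, ha' k hk, ha' (k + 1) (by omega), tan_pi_div_two_pow_add_two]
  have hc' := eq_tan_pi_div_four_sub hb' hc1 hc
  have hmem : ∀ k ≥ 1, π / 4 - π / 2 ^ (k + 2) ∈ Set.Ioo 0 (π / 4) := fun k hk => by
    obtain ⟨hθ₀, hθ₁⟩ := pi_div_two_pow_mem_Ioc hk
    constructor <;> linarith [pi_pos]
  have hIoo : Set.Ioo 0 (π / 4) ⊆ Set.Ioo (-(π / 2)) (π / 2) :=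
    Set.Ioo_subset_Ioo (by linarith [pi_pos]) (by linarith [pi_pos])
  refine ⟨fun k hk => ?_, fun k hk => ?_⟩
  · rw [hc' k hk, hc' (k + 1) (by omega)]
    exact strictMonoOn_tan (hIoo (hmem k hk)) (hIoo (hmem (k + 1) (by omega)))
      (sub_lt_sub_left (pi_div_two_pow_succ_lt (k + 2)) _)
  · rw [hc' k hk]
    exact tan_mem_Ioo_zero_one (hmem k hk)
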